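/- Let H be a Hilbert space decomposed as a direct sum over indices {1,...,M}, with each component embedded in L^2(Π). Define κ(I) = sup{κ ≥ 0 : κ ≤ ‖Σ_{m∈I} f_m‖²_{L²} / Σ_{m∈I} ‖f_m‖²_{L²} for all choices of f_m} and ρ(I) = sup of the L²-correlation between functions supported on I and functions supported on the complement I^c. Then for any f = Σ_{m=1}^M f_m and any index set I ⊆ {1,...,M}, one has ‖f‖²_{L²(Π)} ≥ (1 − ρ(I)²) κ(I) Σ_{m∈I} ‖f_m‖²_{L²(Π)}. -/

import Mathlib

open scoped RealInnerProductSpace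
open Finset

/-- Expanding `‖x + y‖²` and bounding the cross term by `ρ‖x‖‖y‖` leaves
`‖x‖² - 2ρ‖x‖‖y‖ + ‖y‖² = (1 - ρ²)‖x‖² + (‖y‖ - ρ‖x‖)²`. -/
theorem one_sub_sq_mul_norm_sq_le_norm_add_sq {E : Type*} [NormedAddCommGroup E]
    [InnerProductSpace ℝ E] {x y : E} {ρ : ℝ} (h : |⟪x, y⟫| ≤ ρ * ‖x‖ * ‖y‖) :
    (1 - ρ ^ 2) * ‖x‖ ^ 2 ≤ ‖x + y‖ ^ 2 := by
  have hinner : -(ρ * ‖x‖ * ‖y‖) ≤ ⟪x, y⟫ := by linarith [neg_abs_le ⟪x, y⟫]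
  rw [norm_add_sq_real]
  nlinarith [sq_nonneg (‖y‖ - ρ * ‖x‖)]

theorem stmt0_general {L : Type*} [NormedAddCommGroup L] [InnerProductSpace ℝ L]
    {M : ℕ} (V : Fin M → Submodule ℝ L) (I : Finset (Fin M))
    (κ ρ : ℝ) (hρ0 : 0 ≤ ρ) (hρ1 : ρ ≤ 1)
    (hκ : ∀ g : Fin M → L, (∀ m, g m ∈ V m) →
      κ * ∑ m ∈ I, ‖g m‖ ^ 2 ≤ ‖∑ m ∈ I, g m‖ ^ 2)
    (hρ : ∀ g : Fin M → L, (∀ m, g m ∈ V m) →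
      |⟪∑ m ∈ I, g m, ∑ m ∈ Iᶜ, g m⟫| ≤ ρ * ‖∑ m ∈ I, g m‖ * ‖∑ m ∈ Iᶜ, g m‖)
    (f : Fin M → L) (hf : ∀ m, f m ∈ V m) :
    (1 - ρ ^ 2) * κ * ∑ m ∈ I, ‖f m‖ ^ 2 ≤ ‖∑ m, f m‖ ^ 2 := by
  have hρ_sq : 0 ≤ 1 - ρ ^ 2 := by nlinarith
  calc (1 - ρ ^ 2) * κ * ∑ m ∈ I, ‖f m‖ ^ 2
      = (1 - ρ ^ 2) * (κ * ∑ m ∈ I, ‖f m‖ ^ 2) := by ring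
    _ ≤ (1 - ρ ^ 2) * ‖∑ m ∈ I, f m‖ ^ 2 := mul_le_mul_of_nonneg_left (hκ f hf) hρ_sq
    _ ≤ ‖∑ m ∈ I, f m + ∑ m ∈ Iᶜ, f m‖ ^ 2 :=
        one_sub_sq_mul_norm_sq_le_norm_add_sq (hρ f hf)
    _ = ‖∑ m, f m‖ ^ 2 := by rw [sum_add_sum_compl]

/-- Incoherence lower bound (Lemma 1 of the paper): if `κ` satisfies the defining
inequality of `κ(I)` and `ρ` bounds the correlation between the span of the
components in `I` and those in `Iᶜ`, then
`‖∑ f_m‖² ≥ (1 − ρ²) κ ∑_{m∈I} ‖f_m‖²`. -/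
theorem stmt0 {L : Type*} [NormedAddCommGroup L] [InnerProductSpace ℝ L]
    {M : ℕ} (V : Fin M → Submodule ℝ L) (I : Finset (Fin M))
    (κ ρ : ℝ) (hκ0 : 0 ≤ κ) (hρ0 : 0 ≤ ρ) (hρ1 : ρ ≤ 1)
    (hκ : ∀ g : Fin M → L, (∀ m, g m ∈ V m) →
      κ * ∑ m ∈ I, ‖g m‖ ^ 2 ≤ ‖∑ m ∈ I, g m‖ ^ 2)
    (hρ : ∀ g : Fin M → L, (∀ m, g m ∈ V m) →
      |⟪∑ m ∈ I, g m, ∑ m ∈ Iᶜ, g m⟫| ≤ ρ * ‖∑ m ∈ I, g m‖ * ‖∑ m ∈ Iᶜ, g m‖)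
    (f : Fin M → L) (hf : ∀ m, f m ∈ V m) :
    (1 - ρ ^ 2) * κ * ∑ m ∈ I, ‖f m‖ ^ 2 ≤ ‖∑ m, f m‖ ^ 2 :=
  stmt0_general V I κ ρ hρ0 hρ1 hκ hρ f hf
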